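/- arXiv:2408.06542 — 4 statements merged into one kernel-verified Lean document; each statement's English description precedes it below -/
import Mathlib

section
/- Assume all occupancies are nonnegative, that d^{π'}(s,a) ≤ C·d^π(s,a) for all (s,a), and that whenever d^π(s,a) > 0 one has P'(s'|s,a) = 0 ⟹ P(s'|s,a) = 0. Let ε_{π'} = ∑_{(s,a)} d^π(s,a)·|A'(s,a)| where A' is the advantage of π' in (R', P'), let ε_{R'} = ∑_{(s,a)} d^π(s,a)·|ΔR(s,a)|, let ε_{P'} = ∑_{(s,a) : d^π(s,a)>0} d^π(s,a)·KL(P(·|s,a) ‖ P'(·|s,a)), and let R'_max = max_{(s,a)} |R'(s,a)|. Then J_{P,R}(π) − J_{P,R}(π') ≤ ε_{π'}/(1−γ) + (C+1)·ε_{R'}/(1−γ) + ((C+1)·γ·R'_max/(1−γ)²)·√(2·ε_{P'}). -/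
/-- A belief over a finite set: nonnegative and sums to one. -/
def IsBelief {X : Type*} [Fintype X] (p : X → ℝ) : Prop :=
  (∀ x, 0 ≤ p x) ∧ ∑ x, p x = 1

/-- KL divergence between two distributions on a finite set. -/
noncomputable def KL {X : Type*} [Fintype X] (p q : X → ℝ) : ℝ :=
  ∑ x, if 0 < p x then p x * Real.log (p x / q x) else 0

open Finset

/-!
Computing everything in the occupancies of the true kernel `P`, the performance-difference
identity splits `(1 - γ) (J(π) - J(π'))` into the advantage of `π'` in the model `(R', P')`
averaged over `d^π`, plus a reward-mismatch and a transition-mismatch term, both weighted by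
`d^π - d^{π'}`. The density-ratio bound gives `|d^π - d^{π'}| ≤ (C + 1) d^π`. The transition
term is at most `R'_max / (1 - γ)` times the total variation `∑ |P - P'|`, which Pinsker's
inequality and a Cauchy–Schwarz step over `d^π` bound by `√(2 ε_{P'})`. Pinsker's inequality
itself follows by Cauchy–Schwarz from the pointwise bound
`3 (p - q)² / (p + 2q) ≤ 2 (p log (p / q) - p + q)`.
-/

theorem sub_one_mul_log_sub_nonneg {x : ℝ} (hx : 0 < x) :
    0 ≤ (x - 1) * ((x + 1) * Real.log x - 2 * (x - 1)) := by
  rcases le_total 1 x with h | h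
  · have hlog := Real.le_log_one_add_of_nonneg (sub_nonneg.2 h)
    rw [add_sub_cancel, div_le_iff₀ (by linarith)] at hlog
    exact mul_nonneg (by linarith) (by linarith)
  · have hlog := Real.le_log_one_add_of_nonneg (sub_nonneg.2 ((one_le_inv₀ hx).2 h))
    rw [add_sub_cancel, Real.log_inv, div_le_iff₀ (by linarith [inv_pos.2 hx])] at hlog
    have := mul_le_mul_of_nonneg_left hlog hx.le
    have hinv : x * x⁻¹ = 1 := mul_inv_cancel₀ hx.ne'
    refine mul_nonneg_of_nonpos_of_nonpos (by linarith) ?_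
    nlinarith

theorem three_mul_sq_sub_one_le {t : ℝ} (ht : 0 < t) :
    3 * (t - 1) ^ 2 ≤ 2 * (t + 2) * (t * Real.log t - t + 1) := by
  set F : ℝ → ℝ := fun x => 2 * (x + 2) * (x * Real.log x - x + 1) - 3 * (x - 1) ^ 2 with hF
  have hderiv : ∀ x, 0 < x → HasDerivAt F (4 * ((x + 1) * Real.log x - 2 * (x - 1))) x := by
    intro x hx
    refine ((((hasDerivAt_id' x).add_const 2).const_mul 2).mul
      (((Real.hasDerivAt_mul_log hx.ne').sub (hasDerivAt_id' x)).add_const 1)).sub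
      ((((hasDerivAt_id' x).sub_const 1).pow 2).const_mul 3) |>.congr_deriv ?_
    simp only [mul_one, Pi.sub_apply, add_sub_cancel_right, Nat.cast_ofNat, Nat.add_one_sub_one,
      pow_one]
    ring
  suffices 0 ≤ F t by simp only [hF] at this; linarith
  -- `F'` has the sign of `x - 1`, so by the mean value theorem `F ≥ F 1 = 0`.
  have hF1 : F 1 = 0 := by simp [hF]
  have hcont : ∀ a b, 0 < a → ContinuousOn F (Set.Icc a b) := fun a b ha x hx =>
    (hderiv x (ha.trans_le hx.1)).continuousAt.continuousWithinAt
  rcases lt_trichotomy t 1 with h | rfl | h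
  · obtain ⟨c, ⟨htc, hc1⟩, hc⟩ := exists_hasDerivAt_eq_slope F _ h (hcont t 1 ht)
      fun x hx => hderiv x (ht.trans hx.1)
    rw [hF1, eq_div_iff (by linarith)] at hc
    nlinarith [sub_one_mul_log_sub_nonneg (ht.trans htc)]
  · exact hF1.ge
  · obtain ⟨c, ⟨hc1, hct⟩, hc⟩ := exists_hasDerivAt_eq_slope F _ h (hcont 1 t one_pos)
      fun x hx => hderiv x (one_pos.trans hx.1)
    rw [hF1, eq_div_iff (by linarith)] at hc
    nlinarith [sub_one_mul_log_sub_nonneg (one_pos.trans hc1)]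

theorem three_mul_sq_sub_div_le {p q : ℝ} (hp : 0 ≤ p) (hq : 0 ≤ q) (hac : q = 0 → p = 0) :
    3 * ((p - q) ^ 2 / (p + 2 * q)) ≤ 2 * ((if 0 < p then p * Real.log (p / q) else 0) - p + q) := by
  rcases hp.eq_or_lt with rfl | hp
  · rcases hq.eq_or_lt with rfl | hq
    · simp
    · rw [if_neg (lt_irrefl 0), mul_div_assoc', div_le_iff₀ (by positivity)]
      nlinarith
  · have hq : 0 < q := hq.lt_of_ne fun h => hp.ne' (hac h.symm)
    obtain ⟨t, ht, rfl⟩ : ∃ t, 0 < t ∧ p = t * q := ⟨p / q, div_pos hp hq, by field_simp⟩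
    rw [if_pos hp, mul_div_cancel_right₀ t hq.ne', mul_div_assoc', div_le_iff₀ (by positivity)]
    linear_combination q ^ 2 * three_mul_sq_sub_one_le ht

theorem sq_sum_abs_sub_le_two_mul_KL {X : Type*} [Fintype X] {p q : X → ℝ}
    (hp : IsBelief p) (hq : IsBelief q) (hac : ∀ x, q x = 0 → p x = 0) :
    (∑ x, |p x - q x|) ^ 2 ≤ 2 * KL p q := by
  have hw : ∀ x, 0 ≤ p x + 2 * q x := fun x => by linarith [hp.1 x, hq.1 x]
  have hCS : (∑ x, |p x - q x|) ^ 2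
      ≤ (∑ x, (p x + 2 * q x)) * ∑ x, (p x - q x) ^ 2 / (p x + 2 * q x) := by
    refine sum_sq_le_sum_mul_sum_of_sq_le_mul _ (fun x _ => hw x)
      (fun x _ => div_nonneg (sq_nonneg _) (hw x)) fun x _ => ?_
    rcases (hw x).eq_or_lt with h | h
    · have : p x = q x := by linarith [hp.1 x, hq.1 x]
      simp [this]
    · rw [sq_abs, mul_div_cancel₀ _ h.ne']
  have hmass : ∑ x, (p x + 2 * q x) = 3 := by
    rw [sum_add_distrib, ← mul_sum, hp.2, hq.2]; norm_num
  calc (∑ x, |p x - q x|) ^ 2 ≤ ∑ x, 3 * ((p x - q x) ^ 2 / (p x + 2 * q x)) := by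
        rwa [hmass, mul_sum] at hCS
    _ ≤ ∑ x, 2 * ((if 0 < p x then p x * Real.log (p x / q x) else 0) - p x + q x) :=
        sum_le_sum fun x _ => three_mul_sq_sub_div_le (hp.1 x) (hq.1 x) (hac x)
    _ = 2 * KL p q := by
        rw [← mul_sum, sum_add_distrib, sum_sub_distrib, hp.2, hq.2, KL]; ring

theorem sum_mul_sum_abs_sub_le_sqrt_two_mul_KL {ι X : Type*} [Fintype ι] [Fintype X]
    {w : ι → ℝ} {p q : ι → X → ℝ} (hw : ∀ i, 0 ≤ w i) (hw1 : ∑ i, w i = 1)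
    (hp : ∀ i, IsBelief (p i)) (hq : ∀ i, IsBelief (q i))
    (hac : ∀ i, 0 < w i → ∀ x, q i x = 0 → p i x = 0) :
    ∑ i, w i * ∑ x, |p i x - q i x|
      ≤ √(2 * ∑ i, if 0 < w i then w i * KL (p i) (q i) else 0) := by
  have hpinsker i (h : 0 < w i) := sq_sum_abs_sub_le_two_mul_KL (hp i) (hq i) (hac i h)
  have hCS := sum_sq_le_sum_mul_sum_of_sq_le_mul univ (r := fun i => w i * ∑ x, |p i x - q i x|)
    (g := fun i => if 0 < w i then w i * (2 * KL (p i) (q i)) else 0) (fun i _ => hw i)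
    (fun i _ => by
      split_ifs with h
      · exact mul_nonneg h.le ((sq_nonneg _).trans (hpinsker i h))
      · exact le_rfl)
    (fun i _ => by
      split_ifs with h
      · rw [mul_pow, sq, mul_assoc]
        exact mul_le_mul_of_nonneg_left (mul_le_mul_of_nonneg_left (hpinsker i h) h.le) h.le
      · simp [le_antisymm (not_lt.1 h) (hw i)])
  rw [hw1, one_mul] at hCS
  refine Real.le_sqrt_of_sq_le (hCS.trans_eq ?_)
  rw [mul_sum]
  exact sum_congr rfl fun i _ => by split_ifs <;> ring

theorem IsBelief.abs_sum_mul_le {X : Type*} [Fintype X] {p f : X → ℝ} {M : ℝ} (hp : IsBelief p)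
    (hf : ∀ x, |f x| ≤ M) : |∑ x, p x * f x| ≤ M :=
  calc |∑ x, p x * f x| ≤ ∑ x, p x * |f x| := by
        refine (abs_sum_le_sum_abs _ _).trans_eq (sum_congr rfl fun x _ => ?_)
        rw [abs_mul, abs_of_nonneg (hp.1 x)]
    _ ≤ ∑ x, p x * M := sum_le_sum fun x _ => mul_le_mul_of_nonneg_left (hf x) (hp.1 x)
    _ = M := by rw [← sum_mul, hp.2, one_mul]

theorem abs_sum_mul_sub_sum_mul_le {X : Type*} [Fintype X] {p q f : X → ℝ} {M : ℝ}
    (hf : ∀ x, |f x| ≤ M) : |∑ x, p x * f x - ∑ x, q x * f x| ≤ M * ∑ x, |p x - q x| := by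
  rw [← sum_sub_distrib, mul_sum]
  refine (abs_sum_le_sum_abs _ _).trans (sum_le_sum fun x _ => ?_)
  rw [← sub_mul, abs_mul, mul_comm]
  exact mul_le_mul_of_nonneg_right (hf x) (abs_nonneg _)

theorem sum_mul_abs_sum_mul_sub_sum_mul_le {ι X : Type*} [Fintype ι] [Fintype X]
    {w : ι → ℝ} {p q : ι → X → ℝ} {f : X → ℝ} {M : ℝ} (hw : ∀ i, 0 ≤ w i) (hw1 : ∑ i, w i = 1)
    (hp : ∀ i, IsBelief (p i)) (hq : ∀ i, IsBelief (q i))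
    (hac : ∀ i, 0 < w i → ∀ x, q i x = 0 → p i x = 0) (hM : 0 ≤ M) (hf : ∀ x, |f x| ≤ M) :
    ∑ i, w i * |∑ x, p i x * f x - ∑ x, q i x * f x|
      ≤ M * √(2 * ∑ i, if 0 < w i then w i * KL (p i) (q i) else 0) :=
  calc _ ≤ ∑ i, w i * (M * ∑ x, |p i x - q i x|) :=
        sum_le_sum fun i _ => mul_le_mul_of_nonneg_left (abs_sum_mul_sub_sum_mul_le hf) (hw i)
    _ = M * ∑ i, w i * ∑ x, |p i x - q i x| := by
        rw [mul_sum]; exact sum_congr rfl fun _ _ => by ring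
    _ ≤ _ := mul_le_mul_of_nonneg_left
        (sum_mul_sum_abs_sub_le_sqrt_two_mul_KL hw hw1 hp hq hac) hM

theorem nonneg_of_le_mul_of_sum_eq_one {ι : Type*} [Fintype ι] {d d' : ι → ℝ} {C : ℝ}
    (hd' : ∀ i, 0 ≤ d' i) (hd1 : ∑ i, d i = 1) (hC : ∀ i, d' i ≤ C * d i) : 0 ≤ C :=
  calc 0 ≤ ∑ i, d' i := sum_nonneg fun i _ => hd' i
    _ ≤ ∑ i, C * d i := sum_le_sum fun i _ => hC i
    _ = C := by rw [← mul_sum, hd1, mul_one]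

theorem sum_sub_mul_le_add_one_mul {ι : Type*} [Fintype ι] {d d' g : ι → ℝ} {C : ℝ}
    (hd : ∀ i, 0 ≤ d i) (hd' : ∀ i, 0 ≤ d' i) (hC : ∀ i, d' i ≤ C * d i) :
    ∑ i, (d i - d' i) * g i ≤ (C + 1) * ∑ i, d i * |g i| := by
  rw [mul_sum]
  refine sum_le_sum fun i _ => ?_
  have := abs_nonneg (g i)
  nlinarith [le_abs_self (g i), neg_abs_le (g i), hd i, hd' i, hC i]

section MDP

variable {S A : Type*} [Fintype S] [Fintype A]

def IsValueFunction (γ : ℝ) (ρ r : S → A → ℝ) (K : S → A → S → ℝ) (V : S → ℝ) : Prop :=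
  ∀ s, V s = ∑ a, ρ s a * (r s a + γ * ∑ s', K s a s' * V s')

def IsDiscountedOccupancy (γ : ℝ) (μ : S → ℝ) (K : S → A → S → ℝ) (ρ d : S → A → ℝ) : Prop :=
  ∀ s a, d s a = (1 - γ) * μ s * ρ s a + γ * ρ s a * ∑ p : S × A, K p.1 p.2 s * d p.1 p.2

theorem IsValueFunction.abs_le_div {γ M : ℝ} {ρ r : S → A → ℝ} {K : S → A → S → ℝ} {V : S → ℝ}
    (hV : IsValueFunction γ ρ r K V) (hγ0 : 0 ≤ γ) (hγ1 : γ < 1)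
    (hρ : ∀ s, IsBelief (ρ s)) (hK : ∀ s a, IsBelief (K s a)) (hr : ∀ s a, |r s a| ≤ M) (s : S) :
    |V s| ≤ M / (1 - γ) := by
  have : Nonempty S := ⟨s⟩
  obtain ⟨s₀, hs₀⟩ := Finite.exists_max fun s => |V s|
  have hbellman : |V s₀| ≤ M + γ * |V s₀| := by
    conv_lhs => rw [hV s₀]
    refine (hρ s₀).abs_sum_mul_le fun a => (abs_add_le _ _).trans (add_le_add (hr s₀ a) ?_)
    rw [abs_mul, abs_of_nonneg hγ0]
    exact mul_le_mul_of_nonneg_left ((hK s₀ a).abs_sum_mul_le hs₀) hγ0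
  rw [le_div_iff₀ (sub_pos.2 hγ1)]
  nlinarith [hs₀ s]

namespace IsDiscountedOccupancy

variable {γ : ℝ} {μ : S → ℝ} {P : S → A → S → ℝ} {ρ d : S → A → ℝ}

theorem sum_action (hd : IsDiscountedOccupancy γ μ P ρ d) (hρ : ∀ s, ∑ a, ρ s a = 1) (s : S) :
    ∑ a, d s a = (1 - γ) * μ s + γ * ∑ p : S × A, P p.1 p.2 s * d p.1 p.2 :=
  calc ∑ a, d s a = ∑ a, ρ s a * ((1 - γ) * μ s + γ * ∑ p : S × A, P p.1 p.2 s * d p.1 p.2) :=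
        sum_congr rfl fun a _ => by rw [hd s a]; ring
    _ = _ := by rw [← sum_mul, hρ s, one_mul]

theorem sum_mul_sub_discounted (hd : IsDiscountedOccupancy γ μ P ρ d)
    (hρ : ∀ s, ∑ a, ρ s a = 1) (f : S → ℝ) :
    ∑ p : S × A, d p.1 p.2 * (f p.1 - γ * ∑ s', P p.1 p.2 s' * f s')
      = (1 - γ) * ∑ s, μ s * f s := by
  have hnow : ∑ p : S × A, d p.1 p.2 * f p.1 = ∑ s, (∑ a, d s a) * f s := by
    simp_rw [Fintype.sum_prod_type, sum_mul]
  have hnext : ∑ p : S × A, d p.1 p.2 * ∑ s', P p.1 p.2 s' * f s'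
      = ∑ s', (∑ p : S × A, P p.1 p.2 s' * d p.1 p.2) * f s' := by
    simp_rw [mul_sum, sum_mul]
    rw [sum_comm]
    exact sum_congr rfl fun _ _ => sum_congr rfl fun _ _ => by ring
  simp_rw [mul_sub, sum_sub_distrib, mul_left_comm _ γ, ← mul_sum, hnow, hnext, hd.sum_action hρ]
  simp_rw [add_mul, sum_add_distrib, mul_assoc, ← mul_sum]
  ring

theorem sum_eq_one (hd : IsDiscountedOccupancy γ μ P ρ d) (hγ : γ < 1) (hμ : ∑ s, μ s = 1)
    (hP : ∀ s a, ∑ s', P s a s' = 1) (hρ : ∀ s, ∑ a, ρ s a = 1) :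
    ∑ p : S × A, d p.1 p.2 = 1 := by
  have h := hd.sum_mul_sub_discounted hρ fun _ => 1
  simp only [mul_one, hP, hμ, ← sum_mul] at h
  exact mul_right_cancel₀ (sub_ne_zero.2 hγ.ne') (h.trans (one_mul _).symm)

theorem sum_mul_sub_eq_discounted (hd : IsDiscountedOccupancy γ μ P ρ d) (hρ : ∀ s, ∑ a, ρ s a = 1)
    (q : S → A → ℝ) (f : S → ℝ) :
    ∑ p : S × A, d p.1 p.2 * (q p.1 p.2 - f p.1)
      = ∑ p : S × A, d p.1 p.2 * (q p.1 p.2 - γ * ∑ s', P p.1 p.2 s' * f s')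
        - (1 - γ) * ∑ s, μ s * f s := by
  rw [← hd.sum_mul_sub_discounted hρ, ← sum_sub_distrib]
  exact sum_congr rfl fun _ _ => by ring

theorem sum_mul_advantage_self (hd : IsDiscountedOccupancy γ μ P ρ d) (hρ : ∀ s, ∑ a, ρ s a = 1)
    {q : S → A → ℝ} {V : S → ℝ} (hV : ∀ s, V s = ∑ a, ρ s a * q s a) :
    ∑ p : S × A, d p.1 p.2 * (q p.1 p.2 - V p.1) = 0 := by
  rw [Fintype.sum_prod_type]
  refine sum_eq_zero fun s _ => ?_
  set g := (1 - γ) * μ s + γ * ∑ p : S × A, P p.1 p.2 s * d p.1 p.2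
  calc ∑ a, d s a * (q s a - V s) = g * (∑ a, ρ s a * q s a - (∑ a, ρ s a) * V s) := by
        rw [sum_mul, ← sum_sub_distrib, mul_sum]
        exact sum_congr rfl fun a _ => by rw [hd s a]; ring
    _ = 0 := by rw [hρ s, one_mul, ← hV s, sub_self, mul_zero]

theorem sum_mul_reward (hd : IsDiscountedOccupancy γ μ P ρ d) (hρ : ∀ s, ∑ a, ρ s a = 1)
    {r : S → A → ℝ} {V : S → ℝ} (hV : IsValueFunction γ ρ r P V) :
    ∑ p : S × A, d p.1 p.2 * r p.1 p.2 = (1 - γ) * ∑ s, μ s * V s := by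
  have h := hd.sum_mul_sub_eq_discounted hρ (fun s a => r s a + γ * ∑ s', P s a s' * V s') V
  simp only [hd.sum_mul_advantage_self hρ hV, add_sub_cancel_right] at h
  linarith

theorem sum_mul_advantage_eq (hd : IsDiscountedOccupancy γ μ P ρ d) (hρ : ∀ s, ∑ a, ρ s a = 1)
    {ρ' d' : S → A → ℝ} (hd' : IsDiscountedOccupancy γ μ P ρ' d') (hρ' : ∀ s, ∑ a, ρ' s a = 1)
    {q : S → A → ℝ} {V : S → ℝ} (hV : ∀ s, V s = ∑ a, ρ' s a * q s a) :
    ∑ p : S × A, d p.1 p.2 * (q p.1 p.2 - V p.1)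
      = ∑ p : S × A, (d p.1 p.2 - d' p.1 p.2)
          * (q p.1 p.2 - γ * ∑ s', P p.1 p.2 s' * V s') := by
  have h := hd'.sum_mul_sub_eq_discounted hρ' q V
  rw [hd'.sum_mul_advantage_self hρ' hV] at h
  simp_rw [hd.sum_mul_sub_eq_discounted hρ, sub_mul, sum_sub_distrib]
  linarith

end IsDiscountedOccupancy

theorem performance_gap_eq {γ : ℝ} {μ : S → ℝ} {P P' : S → A → S → ℝ} {R R' π π' dπ dπ' : S → A → ℝ}
    {Vπ VM' V' : S → ℝ} (hπ : ∀ s, ∑ a, π s a = 1) (hπ' : ∀ s, ∑ a, π' s a = 1)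
    (hVπ : IsValueFunction γ π R P Vπ) (hVM' : IsValueFunction γ π' R P VM')
    (hV' : IsValueFunction γ π' R' P' V')
    (hdπ : IsDiscountedOccupancy γ μ P π dπ) (hdπ' : IsDiscountedOccupancy γ μ P π' dπ') :
    (1 - γ) * ((∑ s, μ s * Vπ s) - ∑ s, μ s * VM' s)
      = ∑ p : S × A, dπ p.1 p.2 * ((R' p.1 p.2 + γ * ∑ s', P' p.1 p.2 s' * V' s') - V' p.1)
        + ∑ p : S × A, (dπ p.1 p.2 - dπ' p.1 p.2) * (R p.1 p.2 - R' p.1 p.2)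
        + γ * ∑ p : S × A, (dπ p.1 p.2 - dπ' p.1 p.2)
            * (∑ s', P p.1 p.2 s' * V' s' - ∑ s', P' p.1 p.2 s' * V' s') := by
  rw [mul_sub, ← hdπ.sum_mul_reward hπ hVπ, ← hdπ'.sum_mul_reward hπ' hVM',
    hdπ.sum_mul_advantage_eq hπ hdπ' hπ' hV', mul_sum, ← sum_sub_distrib, ← sum_add_distrib,
    ← sum_add_distrib]
  exact sum_congr rfl fun _ _ => by ring

end MDP

/-- Performance gap bound in mismatched MDPs (Lemma 2). -/
theorem performance_gap_bound_mismatched_mdps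
    {S A : Type*} [Fintype S] [Fintype A] [Nonempty S] [Nonempty A]
    (γ : ℝ) (hγ0 : 0 < γ) (hγ1 : γ < 1)
    (μ : S → ℝ) (hμ : IsBelief μ)
    (P P' : S → A → S → ℝ)
    (hP : ∀ s a, IsBelief (P s a)) (hP' : ∀ s a, IsBelief (P' s a))
    (R R' : S → A → ℝ)
    (π π' : S → A → ℝ)
    (hπ : ∀ s, IsBelief (π s)) (hπ' : ∀ s, IsBelief (π' s))
    -- value functions: Vπ of (π, R, P); VM' of (π', R, P); V' of (π', R', P')
    (Vπ VM' V' : S → ℝ)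
    (hVπ : ∀ s, Vπ s = ∑ a, π s a * (R s a + γ * ∑ s', P s a s' * Vπ s'))
    (hVM' : ∀ s, VM' s = ∑ a, π' s a * (R s a + γ * ∑ s', P s a s' * VM' s'))
    (hV' : ∀ s, V' s = ∑ a, π' s a * (R' s a + γ * ∑ s', P' s a s' * V' s'))
    -- normalized discounted occupancies of π and π' in P
    (dπ dπ' : S → A → ℝ)
    (hdπ : ∀ s a, dπ s a = (1 - γ) * μ s * π s a
        + γ * π s a * ∑ p : S × A, P p.1 p.2 s * dπ p.1 p.2)
    (hdπ' : ∀ s a, dπ' s a = (1 - γ) * μ s * π' s a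
        + γ * π' s a * ∑ p : S × A, P p.1 p.2 s * dπ' p.1 p.2)
    (hdπ_nonneg : ∀ s a, 0 ≤ dπ s a) (hdπ'_nonneg : ∀ s a, 0 ≤ dπ' s a)
    -- bounded density ratio
    (C : ℝ) (hC : ∀ s a, dπ' s a ≤ C * dπ s a)
    -- absolute continuity on the support of dπ
    (hac : ∀ s a, 0 < dπ s a → ∀ s', P' s a s' = 0 → P s a s' = 0)
    -- error terms
    (επ' εR' εP' R'max : ℝ)
    (hεπ' : επ' = ∑ p : S × A, dπ p.1 p.2 *
        |(R' p.1 p.2 + γ * ∑ s', P' p.1 p.2 s' * V' s') - V' p.1|)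
    (hεR' : εR' = ∑ p : S × A, dπ p.1 p.2 * |R' p.1 p.2 - R p.1 p.2|)
    (hεP' : εP' = ∑ p : S × A, if 0 < dπ p.1 p.2 then
        dπ p.1 p.2 * KL (P p.1 p.2) (P' p.1 p.2) else 0)
    (hR'max : R'max = Finset.univ.sup' Finset.univ_nonempty
        (fun p : S × A => |R' p.1 p.2|)) :
    (∑ s, μ s * Vπ s) - (∑ s, μ s * VM' s)
      ≤ επ' / (1 - γ) + (C + 1) * εR' / (1 - γ)
        + ((C + 1) * γ * R'max / (1 - γ) ^ 2) * Real.sqrt (2 * εP') := by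
  have occπ : IsDiscountedOccupancy γ μ P π dπ := hdπ
  have occπ' : IsDiscountedOccupancy γ μ P π' dπ' := hdπ'
  have hγ : 0 < 1 - γ := sub_pos.2 hγ1
  have hd (p : S × A) : 0 ≤ dπ p.1 p.2 := hdπ_nonneg p.1 p.2
  have hd' (p : S × A) : 0 ≤ dπ' p.1 p.2 := hdπ'_nonneg p.1 p.2
  have hmass := occπ.sum_eq_one hγ1 hμ.2 (fun s a => (hP s a).2) fun s => (hπ s).2
  have hC0 : 0 ≤ C + 1 := by
    linarith [nonneg_of_le_mul_of_sum_eq_one hd' hmass fun p => hC p.1 p.2]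
  have hratio (g : S × A → ℝ) := sum_sub_mul_le_add_one_mul (g := g) hd hd' fun p => hC p.1 p.2
  have hR' : ∀ s a, |R' s a| ≤ R'max := fun s a =>
    hR'max ▸ le_sup' (fun p : S × A => |R' p.1 p.2|) (mem_univ (s, a))
  have hM : 0 ≤ R'max / (1 - γ) :=
    div_nonneg ((abs_nonneg _).trans (hR' (Classical.arbitrary S) (Classical.arbitrary A))) hγ.le
  refine le_of_mul_le_mul_left ?_ hγ
  rw [performance_gap_eq (fun s => (hπ s).2) (fun s => (hπ' s).2) hVπ hVM' hV' occπ occπ']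
  calc _ ≤ επ' + (C + 1) * εR' + γ * ((C + 1) * (R'max / (1 - γ) * √(2 * εP'))) := by
        gcongr ?_ + ?_ + γ * ?_
        · exact hεπ' ▸ sum_le_sum fun p _ => mul_le_mul_of_nonneg_left (le_abs_self _) (hd p)
        · simp_rw [hεR', abs_sub_comm (R' _ _)]
          exact hratio _
        · refine (hratio _).trans (mul_le_mul_of_nonneg_left (hεP' ▸ ?_) hC0)
          exact sum_mul_abs_sum_mul_sub_sum_mul_le hd hmass (fun p => hP p.1 p.2)
            (fun p => hP' p.1 p.2) (fun p => hac p.1 p.2) hM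
            (IsValueFunction.abs_le_div hV' hγ0.le hγ1 hπ' hP' hR')
    _ = _ := by field_simp
end

section
/- Let R_max = max_{(s,a)} |R(s,a)|. Then ∑_{o : P(o|b) > 0} P(o|b) · max_{a∈A} ∑_s b(s|o)·R(s,a) − max_{a∈A} ∑_s b(s)·R(s,a) ≤ R_max · √(2·∑_{o : P(o|b) > 0} P(o|b)·KL(b(·|o) ‖ b)). (Note that b(s) = 0 implies b(s|o) = 0, so each KL term is well defined.) -/
/-!
Conditioning on `o` moves the belief from `b` to the posterior `b(·|o)`. The best expected
immediate reward `V(p) = max_a ∑ p(s) R(s,a)` is `Rmax`-Lipschitz for the `ℓ¹` distance, and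
Pinsker's inequality bounds `‖b(·|o) - b‖₁` by `√(2 KL(b(·|o) ‖ b))`. Averaging over `o` with the
weights `P(o|b)`, which sum to one, and applying Jensen's inequality to the concave `√` gives the
bound.

Pinsker's inequality is obtained by summing the pointwise bound
`(p - q)² ≤ (2p + 4q)/3 · q · klFun (p/q)` and applying Cauchy–Schwarz: the weights
`(2p + 4q)/3` sum to `2` and the terms `q · klFun (p/q)` sum to `KL p q`.
-/

open Real InformationTheory

lemma two_mul_sub_one_le_add_one_mul_log {r : ℝ} (hr : 1 ≤ r) :
    2 * (r - 1) ≤ (r + 1) * log r := by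
  have h := le_log_one_add_of_nonneg (x := r - 1) (by linarith)
  rw [add_sub_cancel, div_le_iff₀ (by linarith)] at h
  linarith

lemma add_one_mul_log_le_two_mul_sub_one {r : ℝ} (h0 : 0 < r) (hr : r ≤ 1) :
    (r + 1) * log r ≤ 2 * (r - 1) := by
  have h := two_mul_sub_one_le_add_one_mul_log (one_le_inv_iff₀.2 ⟨h0, hr⟩)
  rw [log_inv] at h
  have : r * (2 * (r⁻¹ - 1)) = 2 * (1 - r) := by field_simp
  nlinarith [mul_le_mul_of_nonneg_left h h0.le]

lemma three_mul_sub_one_sq_le_mul_klFun {r : ℝ} (hr : 0 ≤ r) :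
    3 * (r - 1) ^ 2 ≤ (2 * r + 4) * klFun r := by
  set F : ℝ → ℝ := fun x => (2 * x + 4) * klFun x - 3 * (x - 1) ^ 2
  -- `F' r` has the sign of `r - 1`, so `F` attains its minimum `F 1 = 0` at `1`.
  set F' : ℝ → ℝ := fun x => 4 * ((x + 1) * log x - 2 * (x - 1))
  have hF : ∀ x, 0 < x → HasDerivAt F (F' x) x := by
    intro x hx
    refine ((((hasDerivAt_id x).const_mul 2).add_const 4).mul (hasDerivAt_klFun hx.ne') |>.sub
      ((((hasDerivAt_id x).sub_const 1).pow 2).const_mul 3)).congr_deriv ?_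
    simp only [klFun_apply, id]
    ring
  have hFc : Continuous F := by fun_prop
  have hF1 : F 1 = 0 := by simp [F, klFun_one]
  suffices 0 ≤ F r by simp only [F] at this; linarith
  rcases le_total r 1 with h | h
  · have hanti : AntitoneOn F (Set.Icc 0 1) := by
      refine antitoneOn_of_hasDerivWithinAt_nonpos (convex_Icc 0 1) (f' := F') hFc.continuousOn
        (fun x hx => ?_) (fun x hx => ?_) <;> rw [interior_Icc] at hx
      · exact (hF x hx.1).hasDerivWithinAt
      · nlinarith [add_one_mul_log_le_two_mul_sub_one hx.1 hx.2.le]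
    simpa [hF1] using hanti ⟨hr, h⟩ ⟨zero_le_one, le_rfl⟩ h
  · have hmono : MonotoneOn F (Set.Ici 1) := by
      refine monotoneOn_of_hasDerivWithinAt_nonneg (convex_Ici 1) (f' := F') hFc.continuousOn
        (fun x hx => ?_) (fun x hx => ?_) <;> rw [interior_Ici] at hx
      · exact (hF x (zero_lt_one.trans hx)).hasDerivWithinAt
      · nlinarith [two_mul_sub_one_le_add_one_mul_log hx.le]
    simpa [hF1] using hmono (Set.mem_Ici.2 le_rfl) h h

lemma klSummand_sub_add_eq_mul_klFun {p q : ℝ} (hp : 0 ≤ p) (hpq : q = 0 → p = 0) :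
    (if 0 < p then p * log (p / q) else 0) - p + q = q * klFun (p / q) := by
  by_cases hq : q = 0
  · simp [hq, hpq hq]
  rcases hp.eq_or_lt with rfl | hp
  · simp [klFun_zero]
  · rw [if_pos hp, klFun_apply]
    field_simp
    ring

lemma sub_sq_le_mul_mul_klFun {p q : ℝ} (hp : 0 ≤ p) (hq : 0 ≤ q) (hpq : q = 0 → p = 0) :
    (p - q) ^ 2 ≤ (2 * p + 4 * q) / 3 * (q * klFun (p / q)) := by
  rcases hq.eq_or_lt with rfl | hq
  · simp [hpq rfl]
  have key := three_mul_sub_one_sq_le_mul_klFun (div_nonneg hp hq.le)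
  have hp' : p = q * (p / q) := by field_simp
  calc (p - q) ^ 2 = q ^ 2 * (p / q - 1) ^ 2 := by rw [hp']; field_simp
    _ ≤ q ^ 2 * ((2 * (p / q) + 4) * klFun (p / q) / 3) := by gcongr; linarith
    _ = (2 * p + 4 * q) / 3 * (q * klFun (p / q)) := by rw [hp']; field_simp

section KLDivergence

variable {X : Type*} [Fintype X] {p q : X → ℝ}

lemma KL_eq_sum_mul_klFun (hp : ∀ x, 0 ≤ p x) (hsum : ∑ x, p x = ∑ x, q x)
    (hpq : ∀ x, q x = 0 → p x = 0) : KL p q = ∑ x, q x * klFun (p x / q x) := by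
  simp only [← fun x => klSummand_sub_add_eq_mul_klFun (hp x) (hpq x),
    Finset.sum_add_distrib, Finset.sum_sub_distrib, hsum, KL]
  ring

lemma KL_nonneg (hp : ∀ x, 0 ≤ p x) (hq : ∀ x, 0 ≤ q x) (hsum : ∑ x, p x = ∑ x, q x)
    (hpq : ∀ x, q x = 0 → p x = 0) : 0 ≤ KL p q := by
  rw [KL_eq_sum_mul_klFun hp hsum hpq]
  exact Finset.sum_nonneg fun x _ => mul_nonneg (hq x) (klFun_nonneg (div_nonneg (hp x) (hq x)))

/-- **Pinsker's inequality**. -/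
theorem sum_abs_sub_le_sqrt_two_mul_KL (hp : IsBelief p) (hq : IsBelief q)
    (hpq : ∀ x, q x = 0 → p x = 0) : ∑ x, |p x - q x| ≤ √(2 * KL p q) := by
  have hweights : ∑ x, (2 * p x + 4 * q x) / 3 = 2 := by
    rw [← Finset.sum_div, Finset.sum_add_distrib, ← Finset.mul_sum, ← Finset.mul_sum, hp.2, hq.2]
    norm_num
  calc ∑ x, |p x - q x|
      ≤ ∑ x, √((2 * p x + 4 * q x) / 3) * √(q x * klFun (p x / q x)) :=
        Finset.sum_le_sum fun x _ => by
          rw [← sqrt_mul (by linarith [hp.1 x, hq.1 x])]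
          exact abs_le_sqrt (sub_sq_le_mul_mul_klFun (hp.1 x) (hq.1 x) (hpq x))
    _ ≤ √(∑ x, (2 * p x + 4 * q x) / 3) * √(∑ x, q x * klFun (p x / q x)) :=
        Real.sum_sqrt_mul_sqrt_le _ (fun x => by linarith [hp.1 x, hq.1 x])
          fun x => mul_nonneg (hq.1 x) (klFun_nonneg (div_nonneg (hp.1 x) (hq.1 x)))
    _ = √(2 * KL p q) := by
        rw [hweights, KL_eq_sum_mul_klFun hp.1 (hp.2.trans hq.2.symm) hpq, sqrt_mul zero_le_two]

end KLDivergence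

section BeliefValue

variable {S A : Type*} [Fintype S] [Fintype A] [Nonempty A]

noncomputable def beliefValue (R : S → A → ℝ) (p : S → ℝ) : ℝ :=
  Finset.univ.sup' Finset.univ_nonempty fun a => ∑ s, p s * R s a

lemma beliefValue_sub_le {R : S → A → ℝ} {M : ℝ} (hR : ∀ s a, |R s a| ≤ M) (p q : S → ℝ) :
    beliefValue R p - beliefValue R q ≤ M * ∑ s, |p s - q s| := by
  obtain ⟨a, -, ha⟩ := Finset.exists_mem_eq_sup' Finset.univ_nonempty
    fun a => ∑ s, p s * R s a
  have hq : ∑ s, q s * R s a ≤ beliefValue R q :=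
    Finset.le_sup' (fun a => ∑ s, q s * R s a) (Finset.mem_univ a)
  have hpq : ∑ s, p s * R s a - ∑ s, q s * R s a ≤ M * ∑ s, |p s - q s| := by
    rw [← Finset.sum_sub_distrib, Finset.mul_sum]
    refine Finset.sum_le_sum fun s _ => ?_
    calc p s * R s a - q s * R s a ≤ |p s - q s| * |R s a| := by
          rw [← sub_mul, ← abs_mul]; exact le_abs_self _
      _ ≤ M * |p s - q s| := by
          rw [mul_comm]; exact mul_le_mul_of_nonneg_right (hR s a) (abs_nonneg _)
  rw [beliefValue, ha]
  linarith

end BeliefValue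

section Posterior

variable {S O : Type*} [Fintype S]

def marginal (P : S → O → ℝ) (b : S → ℝ) (o : O) : ℝ := ∑ s, P s o * b s

noncomputable def posterior (P : S → O → ℝ) (b : S → ℝ) (o : O) (s : S) : ℝ :=
  P s o * b s / marginal P b o

variable {P : S → O → ℝ} {b : S → ℝ}

lemma marginal_nonneg (hP : ∀ s o, 0 ≤ P s o) (hb : ∀ s, 0 ≤ b s) (o : O) :
    0 ≤ marginal P b o :=
  Finset.sum_nonneg fun s _ => mul_nonneg (hP s o) (hb s)

lemma sum_marginal [Fintype O] (hP : ∀ s, ∑ o, P s o = 1) : ∑ o, marginal P b o = ∑ s, b s := by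
  simp only [marginal]
  rw [Finset.sum_comm]
  simp [← Finset.sum_mul, hP]

lemma posterior_isBelief (hP : ∀ s o, 0 ≤ P s o) (hb : ∀ s, 0 ≤ b s) {o : O}
    (ho : 0 < marginal P b o) : IsBelief (posterior P b o) :=
  ⟨fun s => div_nonneg (mul_nonneg (hP s o) (hb s)) ho.le, by
    change ∑ s, P s o * b s / marginal P b o = 1
    rw [← Finset.sum_div]
    exact div_self ho.ne'⟩

lemma posterior_eq_zero_of_eq_zero {s : S} (hs : b s = 0) (o : O) : posterior P b o s = 0 := by
  simp [posterior, hs]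

lemma KL_posterior_nonneg (hP : ∀ s o, 0 ≤ P s o) (hb : IsBelief b) (o : O) :
    0 ≤ KL (posterior P b o) b := by
  rcases (marginal_nonneg hP hb.1 o).eq_or_lt with ho | ho
  · simp [KL, posterior, ← ho]
  have hpost := posterior_isBelief hP hb.1 ho
  exact KL_nonneg hpost.1 hb.1 (hpost.2.trans hb.2.symm) fun s hs =>
    posterior_eq_zero_of_eq_zero hs o

lemma marginal_mul_beliefValue_posterior_sub_le {A : Type*} [Fintype A] [Nonempty A]
    {R : S → A → ℝ} {M : ℝ} (hP : ∀ s o, 0 ≤ P s o) (hb : IsBelief b)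
    (hR : ∀ s a, |R s a| ≤ M) (hM : 0 ≤ M) (o : O) :
    marginal P b o * (beliefValue R (posterior P b o) - beliefValue R b)
      ≤ marginal P b o * (M * √(2 * KL (posterior P b o) b)) := by
  rcases (marginal_nonneg hP hb.1 o).eq_or_lt with ho | ho
  · simp [← ho]
  refine mul_le_mul_of_nonneg_left ((beliefValue_sub_le hR _ _).trans ?_) ho.le
  exact mul_le_mul_of_nonneg_left (sum_abs_sub_le_sqrt_two_mul_KL (posterior_isBelief hP hb.1 ho)
    hb fun s hs => posterior_eq_zero_of_eq_zero hs o) hM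

end Posterior

lemma ite_pos_mul_eq_mul {α : Type*} [MulZeroClass α] [LinearOrder α] {m x : α} (hm : 0 ≤ m) :
    (if 0 < m then m * x else 0) = m * x := by
  split_ifs with h
  · rfl
  · rw [le_antisymm (not_lt.1 h) hm, zero_mul]

/-- Expected value of perfect observation upper bound. -/
theorem evpo_upper_bound
    {S O A : Type*} [Fintype S] [Fintype O] [Fintype A] [Nonempty S] [Nonempty A]
    (b : S → ℝ) (hb : IsBelief b)
    (P : S → O → ℝ) (hP : ∀ s, IsBelief (P s))
    (R : S → A → ℝ)
    (Rmax : ℝ)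
    (hRmax : Rmax = Finset.univ.sup' Finset.univ_nonempty
        (fun p : S × A => |R p.1 p.2|)) :
    (∑ o, if 0 < (∑ s, P s o * b s) then
        (∑ s, P s o * b s) *
          (Finset.univ.sup' Finset.univ_nonempty
            (fun a => ∑ s, (P s o * b s / (∑ s', P s' o * b s')) * R s a))
      else 0)
    - Finset.univ.sup' Finset.univ_nonempty (fun a => ∑ s, b s * R s a)
    ≤ Rmax * Real.sqrt (2 * ∑ o, if 0 < (∑ s, P s o * b s) then
        (∑ s, P s o * b s) *
          KL (fun s => P s o * b s / (∑ s', P s' o * b s')) b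
      else 0) := by
  have hR : ∀ s a, |R s a| ≤ Rmax := fun s a =>
    hRmax ▸ Finset.le_sup' (fun p : S × A => |R p.1 p.2|) (Finset.mem_univ (s, a))
  have hR0 : 0 ≤ Rmax := (abs_nonneg _).trans (hR (Classical.arbitrary S) (Classical.arbitrary A))
  have hP0 : ∀ s o, 0 ≤ P s o := fun s => (hP s).1
  have hm : ∀ o, 0 ≤ marginal P b o := marginal_nonneg hP0 hb.1
  have hm1 : ∑ o, marginal P b o = 1 := (sum_marginal fun s => (hP s).2).trans hb.2
  change ∑ o, (if 0 < marginal P b o then marginal P b o * beliefValue R (posterior P b o) else 0)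
      - beliefValue R b ≤ Rmax * √(2 * ∑ o, if 0 < marginal P b o then
        marginal P b o * KL (posterior P b o) b else 0)
  simp only [ite_pos_mul_eq_mul (hm _)]
  calc ∑ o, marginal P b o * beliefValue R (posterior P b o) - beliefValue R b
      = ∑ o, marginal P b o * (beliefValue R (posterior P b o) - beliefValue R b) := by
        simp only [mul_sub, Finset.sum_sub_distrib, ← Finset.sum_mul, hm1, one_mul]
    _ ≤ ∑ o, marginal P b o * (Rmax * √(2 * KL (posterior P b o) b)) :=
        Finset.sum_le_sum fun o _ =>
          marginal_mul_beliefValue_posterior_sub_le hP0 hb hR hR0 o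
    _ = Rmax * ∑ o, marginal P b o • √(2 * KL (posterior P b o) b) := by
        simp only [Finset.mul_sum, smul_eq_mul, mul_left_comm]
    _ ≤ Rmax * √(∑ o, marginal P b o • (2 * KL (posterior P b o) b)) :=
        mul_le_mul_of_nonneg_left (strictConcaveOn_sqrt.concaveOn.le_map_sum
          (fun o _ => hm o) hm1 fun o _ =>
            Set.mem_Ici.2 (mul_nonneg zero_le_two (KL_posterior_nonneg hP0 hb o))) hR0
    _ = Rmax * √(2 * ∑ o, marginal P b o * KL (posterior P b o) b) := by
        simp only [smul_eq_mul, Finset.mul_sum, mul_left_comm]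
end

section
/- For every k ∈ ℕ, every belief b over S, and every a ∈ A, the closed-loop value functions dominate the open-loop value functions: Q_k(b,a) ≥ Q^{open}_k(b,a) and V_k(b) ≥ V^{open}_k(b). -/
/-- Predicted (one-step open-loop) belief `b_a(s') = ∑_s P(s'|s,a) b(s)`. -/
noncomputable def predBelief {S A : Type*} [Fintype S]
    (T : S → A → S → ℝ) (b : S → ℝ) (a : A) (s' : S) : ℝ :=
  ∑ s, T s a s' * b s

/-- Observation predictive `P(o'|b,a) = ∑_{s'} P(o'|s') b_a(s')`. -/
noncomputable def obsPred {S O A : Type*} [Fintype S]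
    (T : S → A → S → ℝ) (L : S → O → ℝ) (b : S → ℝ) (a : A) (o : O) : ℝ :=
  ∑ s', L s' o * predBelief T b a s'

/-- Posterior `τ(b,a,o')(s') = P(o'|s') b_a(s') / P(o'|b,a)`. -/
noncomputable def postBelief {S O A : Type*} [Fintype S]
    (T : S → A → S → ℝ) (L : S → O → ℝ) (b : S → ℝ) (a : A) (o : O) (s' : S) : ℝ :=
  L s' o * predBelief T b a s' / obsPred T L b a o

/-- Information gain `IG(b,a)`. -/
noncomputable def IG {S O A : Type*} [Fintype S] [Fintype O]
    (T : S → A → S → ℝ) (L : S → O → ℝ) (b : S → ℝ) (a : A) : ℝ :=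
  ∑ o, if 0 < obsPred T L b a o then
    obsPred T L b a o * KL (postBelief T L b a o) (predBelief T b a) else 0

/-- Closed-loop finite-horizon action value `Q_k(b,a)`. -/
noncomputable def Qclosed {S O A : Type*} [Fintype S] [Fintype O] [Fintype A] [Nonempty A]
    (γ : ℝ) (T : S → A → S → ℝ) (L : S → O → ℝ) (R : S → A → ℝ) :
    ℕ → (S → ℝ) → A → ℝ
  | 0, b, a => ∑ s, b s * R s a
  | (k + 1), b, a =>
      (∑ s, b s * R s a) + γ * ∑ o, if 0 < obsPred T L b a o then
        obsPred T L b a o *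
          Finset.univ.sup' Finset.univ_nonempty (Qclosed γ T L R k (postBelief T L b a o))
      else 0

/-- Closed-loop finite-horizon value `V_k(b) = max_a Q_k(b,a)`. -/
noncomputable def Vclosed {S O A : Type*} [Fintype S] [Fintype O] [Fintype A] [Nonempty A]
    (γ : ℝ) (T : S → A → S → ℝ) (L : S → O → ℝ) (R : S → A → ℝ)
    (k : ℕ) (b : S → ℝ) : ℝ :=
  Finset.univ.sup' Finset.univ_nonempty (Qclosed γ T L R k b)

/-- Open-loop finite-horizon action value `Q^{open}_k(b,a)`. -/
noncomputable def Qopen {S A : Type*} [Fintype S] [Fintype A] [Nonempty A]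
    (γ : ℝ) (T : S → A → S → ℝ) (R : S → A → ℝ) :
    ℕ → (S → ℝ) → A → ℝ
  | 0, b, a => ∑ s, b s * R s a
  | (k + 1), b, a =>
      (∑ s, b s * R s a) +
        γ * Finset.univ.sup' Finset.univ_nonempty (Qopen γ T R k (predBelief T b a))

/-- Open-loop finite-horizon value `V^{open}_k(b) = max_a Q^{open}_k(b,a)`. -/
noncomputable def Vopen {S A : Type*} [Fintype S] [Fintype A] [Nonempty A]
    (γ : ℝ) (T : S → A → S → ℝ) (R : S → A → ℝ)
    (k : ℕ) (b : S → ℝ) : ℝ :=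
  Finset.univ.sup' Finset.univ_nonempty (Qopen γ T R k b)

theorem ConvexOn.finset_sup' {𝕜 E β ι : Type*} [Semiring 𝕜] [PartialOrder 𝕜]
    [AddCommMonoid E] [AddCommMonoid β] [LinearOrder β] [IsOrderedAddMonoid β] [SMul 𝕜 E]
    [Module 𝕜 β] [PosSMulStrictMono 𝕜 β] {s : Set E} {t : Finset ι} (ht : t.Nonempty)
    {f : ι → E → β}
    (hf : ∀ i ∈ t, ConvexOn 𝕜 s (f i)) : ConvexOn 𝕜 s (t.sup' ht f) :=
  Finset.sup'_induction ht f (fun _ h₁ _ h₂ => h₁.sup h₂) hf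

section Beliefs

variable {S O A : Type*} [Fintype S] [Fintype O]
  {T : S → A → S → ℝ} {L : S → O → ℝ} {b : S → ℝ}

theorem IsBelief.predBelief (hT : ∀ s a, IsBelief (T s a)) (hb : IsBelief b) (a : A) :
    IsBelief (predBelief T b a) := by
  refine ⟨fun s' => Finset.sum_nonneg fun s _ => mul_nonneg ((hT s a).1 s') (hb.1 s), ?_⟩
  change ∑ s', ∑ s, T s a s' * b s = 1
  rw [Finset.sum_comm]
  simp_rw [← Finset.sum_mul, (hT _ a).2, one_mul, hb.2]

theorem obsPred_nonneg (hT : ∀ s a, IsBelief (T s a)) (hL : ∀ s, IsBelief (L s))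
    (hb : IsBelief b) (a : A) (o : O) : 0 ≤ obsPred T L b a o :=
  Finset.sum_nonneg fun s' _ => mul_nonneg ((hL s').1 o) ((hb.predBelief hT a).1 s')

theorem IsBelief.postBelief (hT : ∀ s a, IsBelief (T s a)) (hL : ∀ s, IsBelief (L s))
    (hb : IsBelief b) {a : A} {o : O} (ho : 0 < obsPred T L b a o) :
    IsBelief (postBelief T L b a o) := by
  refine ⟨fun s' => div_nonneg (mul_nonneg ((hL s').1 o) ((hb.predBelief hT a).1 s')) ho.le,
    ?_⟩
  change ∑ s', L s' o * _root_.predBelief T b a s' / obsPred T L b a o = 1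
  rw [← Finset.sum_div]
  exact div_self ho.ne'

theorem sum_obsPred_filter_pos (hT : ∀ s a, IsBelief (T s a)) (hL : ∀ s, IsBelief (L s))
    (hb : IsBelief b) (a : A) : ∑ o with 0 < obsPred T L b a o, obsPred T L b a o = 1 := by
  rw [Finset.sum_filter_of_ne fun o _ h => (obsPred_nonneg hT hL hb a o).lt_of_ne' h]
  unfold obsPred
  rw [Finset.sum_comm]
  simp_rw [← Finset.sum_mul, (hL _).2, one_mul, (hb.predBelief hT a).2]

theorem sum_obsPred_smul_postBelief (hT : ∀ s a, IsBelief (T s a)) (hL : ∀ s, IsBelief (L s))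
    (hb : IsBelief b) (a : A) :
    ∑ o with 0 < obsPred T L b a o, obsPred T L b a o • postBelief T L b a o =
      predBelief T b a := by
  funext s'
  have hjoint (s : S) (o : O) : 0 ≤ L s o * predBelief T b a s :=
    mul_nonneg ((hL s).1 o) ((hb.predBelief hT a).1 s)
  calc (∑ o with 0 < obsPred T L b a o, obsPred T L b a o • postBelief T L b a o) s'
      = ∑ o with 0 < obsPred T L b a o, L s' o * predBelief T b a s' := by
        rw [Finset.sum_apply]
        refine Finset.sum_congr rfl fun o ho => ?_
        exact mul_div_cancel₀ _ (Finset.mem_filter.1 ho).2.ne'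
    _ = ∑ o, L s' o * predBelief T b a s' := by
        refine Finset.sum_filter_of_ne fun o _ h => ?_
        exact ((hjoint s' o).lt_of_ne' h).trans_le
          (Finset.single_le_sum (fun s _ => hjoint s o) (Finset.mem_univ s'))
    _ = predBelief T b a s' := by rw [← Finset.sum_mul, (hL s').2, one_mul]

end Beliefs

section ValueFunctions

variable {S O A : Type*} [Fintype S] [Fintype O] [Fintype A] [Nonempty A]
  {γ : ℝ} {T : S → A → S → ℝ} {L : S → O → ℝ} {R : S → A → ℝ} {b : S → ℝ}

theorem Vopen_eq_finset_sup' (k : ℕ) :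
    Vopen γ T R k = Finset.univ.sup' Finset.univ_nonempty fun a b => Qopen γ T R k b a := by
  funext b
  simp only [Vopen, Finset.sup'_apply]

theorem convexOn_Vopen (hγ : 0 ≤ γ) (T : S → A → S → ℝ) (R : S → A → ℝ) (k : ℕ) :
    ConvexOn ℝ Set.univ (Vopen γ T R k) := by
  rw [Vopen_eq_finset_sup']
  refine ConvexOn.finset_sup' _ fun a _ => ?_
  have hreward : ConvexOn ℝ Set.univ (fun b : S → ℝ => ∑ s, b s * R s a) :=
    (Fintype.linearCombination ℝ (fun s => R s a)).convexOn convex_univ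
  cases k with
  | zero => exact hreward
  | succ k =>
    -- `predBelief T · a` is the linear map `b ↦ M *ᵥ b` with `M s' s = T s a s'`.
    let M : Matrix S S ℝ := Matrix.of fun s' s => T s a s'
    exact hreward.add (((convexOn_Vopen hγ T R k).comp_linearMap M.mulVecLin).smul hγ)

theorem Vopen_predBelief_le_sum (hγ : 0 ≤ γ) (hT : ∀ s a, IsBelief (T s a))
    (hL : ∀ s, IsBelief (L s)) (R : S → A → ℝ) (k : ℕ) (hb : IsBelief b) (a : A) :
    Vopen γ T R k (predBelief T b a) ≤ ∑ o with 0 < obsPred T L b a o,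
      obsPred T L b a o * Vopen γ T R k (postBelief T L b a o) := by
  rw [← sum_obsPred_smul_postBelief hT hL hb a]
  simpa only [smul_eq_mul] using (convexOn_Vopen hγ T R k).map_sum_le
    (fun o ho => (Finset.mem_filter.1 ho).2.le) (sum_obsPred_filter_pos hT hL hb a)
    fun _ _ => Set.mem_univ _

theorem Qclosed_succ (k : ℕ) (a : A) :
    Qclosed γ T L R (k + 1) b a = ∑ s, b s * R s a + γ * ∑ o with 0 < obsPred T L b a o,
      obsPred T L b a o * Vclosed γ T L R k (postBelief T L b a o) := by
  rw [Finset.sum_filter]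
  rfl

theorem Vopen_le_Vclosed_of_Qopen_le {k : ℕ}
    (h : ∀ a, Qopen γ T R k b a ≤ Qclosed γ T L R k b a) :
    Vopen γ T R k b ≤ Vclosed γ T L R k b :=
  Finset.sup'_mono_fun fun a _ => h a

theorem Qopen_le_Qclosed (hγ : 0 ≤ γ) (hT : ∀ s a, IsBelief (T s a))
    (hL : ∀ s, IsBelief (L s)) (R : S → A → ℝ) (k : ℕ) (hb : IsBelief b) (a : A) :
    Qopen γ T R k b a ≤ Qclosed γ T L R k b a := by
  induction k generalizing b a with
  | zero => exact le_rfl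
  | succ k ih =>
    calc Qopen γ T R (k + 1) b a
        = ∑ s, b s * R s a + γ * Vopen γ T R k (predBelief T b a) := rfl
      _ ≤ ∑ s, b s * R s a + γ * ∑ o with 0 < obsPred T L b a o,
            obsPred T L b a o * Vopen γ T R k (postBelief T L b a o) := by
          gcongr
          exact Vopen_predBelief_le_sum hγ hT hL R k hb a
      _ ≤ ∑ s, b s * R s a + γ * ∑ o with 0 < obsPred T L b a o,
            obsPred T L b a o * Vclosed γ T L R k (postBelief T L b a o) := by
          gcongr with o ho
          · exact (Finset.mem_filter.1 ho).2.le
          · exact Vopen_le_Vclosed_of_Qopen_le <|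
              ih (hb.postBelief hT hL (Finset.mem_filter.1 ho).2)
      _ = Qclosed γ T L R (k + 1) b a := (Qclosed_succ k a).symm

end ValueFunctions

theorem closed_loop_dominates_open_loop_general
    {S O A : Type*} [Fintype S] [Fintype O] [Fintype A] [Nonempty A]
    (γ : ℝ) (hγ0 : 0 < γ)
    (T : S → A → S → ℝ) (hT : ∀ s a, IsBelief (T s a))
    (L : S → O → ℝ) (hL : ∀ s, IsBelief (L s))
    (R : S → A → ℝ) :
    ∀ (k : ℕ) (b : S → ℝ), IsBelief b → ∀ a : A,
      Qclosed γ T L R k b a ≥ Qopen γ T R k b a ∧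
      Vclosed γ T L R k b ≥ Vopen γ T R k b := by
  intro k b hb a
  have hQ (a' : A) := Qopen_le_Qclosed hγ0.le hT hL R k hb a'
  exact ⟨hQ a, Vopen_le_Vclosed_of_Qopen_le hQ⟩

/-- Closed-loop value functions dominate open-loop value functions
(finite-horizon form of Proposition 3: EVPO ≥ 0 in POMDPs). -/
theorem closed_loop_dominates_open_loop
    {S O A : Type*} [Fintype S] [Fintype O] [Fintype A] [Nonempty A]
    (γ : ℝ) (hγ0 : 0 < γ) (hγ1 : γ < 1)
    (T : S → A → S → ℝ) (hT : ∀ s a, IsBelief (T s a))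
    (L : S → O → ℝ) (hL : ∀ s, IsBelief (L s))
    (R : S → A → ℝ) :
    ∀ (k : ℕ) (b : S → ℝ), IsBelief b → ∀ a : A,
      Qclosed γ T L R k b a ≥ Qopen γ T R k b a ∧
      Vclosed γ T L R k b ≥ Vopen γ T R k b :=
  closed_loop_dominates_open_loop_general γ hγ0 T hT L hL R
end

section
/- The expected posterior information gain is bounded by the prior information gain: for every belief b over S, every a ∈ A, with L(o|b) = ∑_s P(o|s)·b(s) and posterior b(·|o)(s) = P(o|s)·b(s)/L(o|b) when L(o|b) > 0, it holds that ∑_{o : L(o|b) > 0} L(o|b)·IG(b(·|o), a) ≤ IG(b, a). -/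
/-!
Writing `H` for entropy, `IG(b,a) = H(P(·|b,a)) - ∑_{s'} b_a(s') H(P(·|s'))` is the mutual
information between the next state and the next observation. The first term is a concave
function (`negMulLog` is concave) of the linear map `b ↦ P(·|b,a)`, and the second is linear
in `b`, so `IG(·,a)` is concave. The posteriors `b(·|o)` average to `b` with weights `L(o|b)`,
and Jensen's inequality gives the claim.
-/

open Real Finset

lemma ite_pos_mul_eq_mul_s15 {x : ℝ} (hx : 0 ≤ x) (y : ℝ) :
    (if 0 < x then x * y else 0) = x * y := by
  rcases hx.eq_or_lt with rfl | hx
  · simp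
  · simp [hx]

section Bayes

variable {S O : Type*} [Fintype S]

-- `L(o|q)` and `q(·|o)`; at `q = b_a` these are `obsPred` and `postBelief`, definitionally.
noncomputable def obsMarginal (L : S → O → ℝ) (q : S → ℝ) (o : O) : ℝ :=
  ∑ s, L s o * q s

noncomputable def condBelief (L : S → O → ℝ) (q : S → ℝ) (o : O) (s : S) : ℝ :=
  L s o * q s / obsMarginal L q o

variable {L : S → O → ℝ} {q : S → ℝ}

lemma mul_le_obsMarginal (hL : ∀ s, 0 ≤ L s) (hq : 0 ≤ q) (s : S) (o : O) :
    L s o * q s ≤ obsMarginal L q o :=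
  single_le_sum (fun s _ => mul_nonneg (hL s o) (hq s)) (mem_univ s)

lemma obsMarginal_nonneg (hL : ∀ s, 0 ≤ L s) (hq : 0 ≤ q) (o : O) : 0 ≤ obsMarginal L q o :=
  sum_nonneg fun s _ => mul_nonneg (hL s o) (hq s)

lemma condBelief_nonneg (hL : ∀ s, 0 ≤ L s) (hq : 0 ≤ q) (o : O) : 0 ≤ condBelief L q o :=
  fun s => div_nonneg (mul_nonneg (hL s o) (hq s)) (obsMarginal_nonneg hL hq o)

lemma obsMarginal_mul_KL_condBelief (hL : ∀ s, 0 ≤ L s) (hq : 0 ≤ q) (o : O) :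
    obsMarginal L q o * KL (condBelief L q o) q =
      ∑ s, L s o * q s * log (L s o) + negMulLog (obsMarginal L q o) := by
  set Z := obsMarginal L q o
  have hZ : negMulLog Z = ∑ s, -(L s o * q s * log Z) := by
    rw [negMulLog, sum_neg_distrib, ← sum_mul, neg_mul]; rfl
  rw [hZ, ← sum_add_distrib, KL, mul_sum]
  refine sum_congr rfl fun s _ => ?_
  by_cases h0 : L s o * q s = 0
  · simp [condBelief, h0]
  have hpos : 0 < L s o * q s := (mul_nonneg (hL s o) (hq s)).lt_of_ne' h0
  have hZpos : 0 < Z := hpos.trans_le (mul_le_obsMarginal hL hq s o)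
  have hc : condBelief L q o s = L s o * q s / Z := rfl
  have hratio : condBelief L q o s / q s = L s o / Z := by
    rw [hc]
    field_simp [right_ne_zero_of_mul h0]
  rw [hc, if_pos (div_pos hpos hZpos), ← hc, hratio,
    log_div (left_ne_zero_of_mul h0) hZpos.ne', hc]
  field_simp
  ring

variable [Fintype O]

lemma sum_obsMarginal (hL : ∀ s, ∑ o, L s o = 1) : ∑ o, obsMarginal L q o = ∑ s, q s := by
  simp only [obsMarginal]
  rw [sum_comm]
  simp only [← sum_mul, hL, one_mul]

lemma sum_obsMarginal_smul_condBelief (hL : ∀ s, 0 ≤ L s) (hL1 : ∀ s, ∑ o, L s o = 1)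
    (hq : 0 ≤ q) : ∑ o, obsMarginal L q o • condBelief L q o = q := by
  ext s
  have hterm (o : O) : obsMarginal L q o * condBelief L q o s = L s o * q s := by
    rcases (obsMarginal_nonneg hL hq o).eq_or_lt with hZ | hZ
    · rw [← hZ, zero_mul]
      exact le_antisymm (mul_nonneg (hL s o) (hq s)) (hZ ▸ mul_le_obsMarginal hL hq s o)
    · exact mul_div_cancel₀ _ hZ.ne'
  simp only [Finset.sum_apply, Pi.smul_apply, smul_eq_mul, hterm, ← sum_mul, hL1, one_mul]

end Bayes

section InformationGain

variable {S O A : Type*} [Fintype S] {T : S → A → S → ℝ} {L : S → O → ℝ}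

lemma predBelief_nonneg (hT : ∀ s a, 0 ≤ T s a) {p : S → ℝ} (hp : 0 ≤ p) (a : A) :
    0 ≤ predBelief T p a :=
  fun s' => sum_nonneg fun s _ => mul_nonneg (hT s a s') (hp s)

lemma predBelief_smul_add_smul (p p' : S → ℝ) (c d : ℝ) (a : A) :
    predBelief T (c • p + d • p') a = c • predBelief T p a + d • predBelief T p' a := by
  ext s'
  simp only [predBelief, Pi.add_apply, Pi.smul_apply, smul_eq_mul, mul_sum, ← sum_add_distrib]
  exact sum_congr rfl fun s _ => by ring

lemma obsPred_smul_add_smul (p p' : S → ℝ) (c d : ℝ) (a : A) (o : O) :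
    obsPred T L (c • p + d • p') a o = c * obsPred T L p a o + d * obsPred T L p' a o := by
  simp only [obsPred, predBelief_smul_add_smul, Pi.add_apply, Pi.smul_apply, smul_eq_mul, mul_sum,
    ← sum_add_distrib]
  exact sum_congr rfl fun s' _ => by ring

variable [Fintype O]

lemma IG_eq_entropy_sub (hT : ∀ s a, 0 ≤ T s a) (hL : ∀ s, 0 ≤ L s) {p : S → ℝ}
    (hp : 0 ≤ p) (a : A) :
    IG T L p a = ∑ o, negMulLog (obsPred T L p a o) -
      ∑ s', predBelief T p a s' * ∑ o, negMulLog (L s' o) := by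
  set q := predBelief T p a
  have hq : 0 ≤ q := predBelief_nonneg hT hp a
  calc IG T L p a = ∑ o, obsMarginal L q o * KL (condBelief L q o) q :=
        sum_congr rfl fun o _ => ite_pos_mul_eq_mul_s15 (obsMarginal_nonneg hL hq o) _
    _ = ∑ o, negMulLog (obsMarginal L q o) + ∑ o, ∑ s', L s' o * q s' * log (L s' o) := by
        simp only [obsMarginal_mul_KL_condBelief hL hq, sum_add_distrib, add_comm]
    _ = ∑ o, negMulLog (obsPred T L p a o) - ∑ s', q s' * ∑ o, negMulLog (L s' o) := by
        rw [sub_eq_add_neg, sum_comm, ← sum_neg_distrib]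
        simp only [negMulLog, mul_sum, ← sum_neg_distrib]
        congr 1
        exact sum_congr rfl fun s' _ => sum_congr rfl fun o _ => by ring

theorem concaveOn_IG (hT : ∀ s a, 0 ≤ T s a) (hL : ∀ s, 0 ≤ L s) (a : A) :
    ConcaveOn ℝ (Set.Ici 0) fun p => IG T L p a := by
  refine ⟨convex_Ici 0, fun p hp p' hp' c d hc hd hcd => ?_⟩
  have hmix : 0 ≤ c • p + d • p' := add_nonneg (smul_nonneg hc hp) (smul_nonneg hd hp')
  simp only [smul_eq_mul, IG_eq_entropy_sub hT hL hp, IG_eq_entropy_sub hT hL hp',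
    IG_eq_entropy_sub hT hL hmix, obsPred_smul_add_smul, predBelief_smul_add_smul]
  have hentropy :
      c * ∑ o, negMulLog (obsPred T L p a o) + d * ∑ o, negMulLog (obsPred T L p' a o) ≤
        ∑ o, negMulLog (c * obsPred T L p a o + d * obsPred T L p' a o) := by
    rw [mul_sum, mul_sum, ← sum_add_distrib]
    exact sum_le_sum fun o _ => concaveOn_negMulLog.2
      (obsMarginal_nonneg hL (predBelief_nonneg hT hp a) o)
      (obsMarginal_nonneg hL (predBelief_nonneg hT hp' a) o) hc hd hcd
  have hlinear :
      ∑ s', (c • predBelief T p a + d • predBelief T p' a) s' * ∑ o, negMulLog (L s' o) =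
        c * ∑ s', predBelief T p a s' * ∑ o, negMulLog (L s' o) +
          d * ∑ s', predBelief T p' a s' * ∑ o, negMulLog (L s' o) := by
    simp only [Pi.add_apply, Pi.smul_apply, smul_eq_mul, add_mul, sum_add_distrib, mul_sum,
      mul_assoc]
  linarith

end InformationGain

/-- Information gain decreases in expectation after Bayesian conditioning
(intermediate claim in the proof of the EFE EVPO bound). -/
theorem expected_posterior_ig_le_prior_ig
    {S O A : Type*} [Fintype S] [Fintype O]
    (T : S → A → S → ℝ) (hT : ∀ s a, IsBelief (T s a))
    (L : S → O → ℝ) (hL : ∀ s, IsBelief (L s))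
    (b : S → ℝ) (hb : IsBelief b) (a : A) :
    (∑ o, if 0 < (∑ s, L s o * b s) then
        (∑ s, L s o * b s) *
          IG T L (fun s => L s o * b s / (∑ s', L s' o * b s')) a
      else 0)
    ≤ IG T L b a := by
  have hT0 : ∀ s a, 0 ≤ T s a := fun s a => (hT s a).1
  have hL0 : ∀ s, 0 ≤ L s := fun s => (hL s).1
  have hb0 : 0 ≤ b := hb.1
  change ∑ o, (if 0 < obsMarginal L b o then
      obsMarginal L b o * IG T L (condBelief L b o) a else 0) ≤ _
  calc _ = ∑ o, obsMarginal L b o • IG T L (condBelief L b o) a :=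
        sum_congr rfl fun o _ => ite_pos_mul_eq_mul_s15 (obsMarginal_nonneg hL0 hb0 o) _
    _ ≤ IG T L (∑ o, obsMarginal L b o • condBelief L b o) a :=
        (concaveOn_IG hT0 hL0 a).le_map_sum (fun o _ => obsMarginal_nonneg hL0 hb0 o)
          (by rw [sum_obsMarginal fun s => (hL s).2, hb.2])
          fun o _ => condBelief_nonneg hL0 hb0 o
    _ = IG T L b a := by rw [sum_obsMarginal_smul_condBelief hL0 (fun s => (hL s).2) hb0]
end
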